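/- Conservation of symmetric information under n-fold polarization: for any binary-input channel W with finite output alphabet and any n ≥ 0, Σ_{s∈{+,−}ⁿ} I(W^s) = 2ⁿ · I(W). -/

import Mathlib

/-!
The one-step identity `I(W⁻) + I(W⁺) = 2 I(W)` is the chain rule for mutual information: with
`X₁ = U₁ ⊕ U₂` and `X₂ = U₂`,
`I(U₁; Y₁Y₂) + I(U₂; Y₁Y₂U₁) = I(U₁U₂; Y₁Y₂) = I(X₁; Y₁) + I(X₂; Y₂)`.
Concretely, both `I(W⁻)` and `I(W⁺)` are averages against the joint law `W⁺(u₂ | y₁y₂u₁)/2`, and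
on its support the two log-likelihood ratios add up to those of the two copies of `W`
(`Wplus_mul_logb_chain`). Splitting the sum over `s ∈ {+,−}ⁿ⁺¹` by its first sign and inducting
on `n`, with `W` replaced by `W⁻` and `W⁺`, gives the theorem.
-/

open Finset Real

noncomputable section

/-- Binary symmetric channel with crossover probability `α`: `BSC α x y = W(y|x)`. -/
def BSC (α : ℝ) : Bool → Bool → ℝ := fun x y => if y = x then 1 - α else α

/-- Arıkan's minus polar transform. -/
def Wminus {Y : Type*} (W : Bool → Y → ℝ) : Bool → Y × Y → ℝ :=
  fun u₁ y => ∑ u₂ : Bool, (1/2) * W (u₁ ^^ u₂) y.1 * W u₂ y.2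

/-- Arıkan's plus polar transform; output `(y₁, y₂, u₁)`. -/
def Wplus {Y : Type*} (W : Bool → Y → ℝ) : Bool → Y × Y × Bool → ℝ :=
  fun u₂ y => (1/2) * W (y.2.2 ^^ u₂) y.1 * W u₂ y.2.1

/-- Mismatched information functional `I(W, V)`. -/
def Ifun {Y : Type*} [Fintype Y] (W V : Bool → Y → ℝ) : ℝ :=
  ∑ y : Y, ∑ x : Bool, (1/2) * W x y *
    Real.logb 2 (V x y / ((1/2) * V false y + (1/2) * V true y))

/-- Output alphabet after applying a sequence of polar transforms
(`true` = plus, `false` = minus, head applied first). -/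
def polarType (Y : Type u) : List Bool → Type u
  | [] => Y
  | true :: s => polarType (Y × Y × Bool) s
  | false :: s => polarType (Y × Y) s

/-- The synthesized channel `W^s`. -/
def polarChan {Y : Type*} (W : Bool → Y → ℝ) : (s : List Bool) → Bool → polarType Y s → ℝ
  | [] => W
  | true :: s => polarChan (Wplus W) s
  | false :: s => polarChan (Wminus W) s

instance polarFintype (Y : Type*) [Fintype Y] : ∀ s : List Bool, Fintype (polarType Y s)
  | [] => inferInstanceAs (Fintype Y)
  | true :: s => polarFintype (Y × Y × Bool) s
  | false :: s => polarFintype (Y × Y) s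

def outputDist {Y : Type*} (W : Bool → Y → ℝ) (y : Y) : ℝ :=
  (1/2) * W false y + (1/2) * W true y

structure IsChannel {Y : Type*} [Fintype Y] (W : Bool → Y → ℝ) : Prop where
  nonneg : ∀ x y, 0 ≤ W x y
  sum_eq_one : ∀ x, ∑ y, W x y = 1

section Transforms

variable {Y : Type*} (W : Bool → Y → ℝ)

lemma Wplus_apply (u₁ u₂ : Bool) (y₁ y₂ : Y) :
    Wplus W u₂ (y₁, y₂, u₁) = (1/2) * W (u₁ ^^ u₂) y₁ * W u₂ y₂ := rfl

lemma Wminus_apply_eq_sum_Wplus (u₁ : Bool) (y₁ y₂ : Y) :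
    Wminus W u₁ (y₁, y₂) = ∑ u₂, Wplus W u₂ (y₁, y₂, u₁) := rfl

lemma outputDist_Wminus (y₁ y₂ : Y) :
    outputDist (Wminus W) (y₁, y₂) = outputDist W y₁ * outputDist W y₂ := by
  simp only [outputDist, Wminus, Fintype.sum_bool, Bool.xor_false, Bool.xor_true,
    Bool.not_false, Bool.not_true]
  ring

lemma outputDist_Wplus (y₁ y₂ : Y) (u₁ : Bool) :
    outputDist (Wplus W) (y₁, y₂, u₁) = (1/2) * Wminus W u₁ (y₁, y₂) := by
  simp only [outputDist, Wminus, Wplus, Fintype.sum_bool]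
  ring

variable {W}

lemma half_mul_le_outputDist (hW : ∀ x y, 0 ≤ W x y) (x : Bool) (y : Y) :
    (1/2) * W x y ≤ outputDist W y := by
  have := hW false y
  have := hW true y
  cases x <;> simp only [outputDist] <;> linarith

lemma Wplus_nonneg (hW : ∀ x y, 0 ≤ W x y) (u₂ : Bool) (y : Y × Y × Bool) :
    0 ≤ Wplus W u₂ y := by
  have := hW (y.2.2 ^^ u₂) y.1
  have := hW u₂ y.2.1
  unfold Wplus
  positivity

lemma Wminus_nonneg (hW : ∀ x y, 0 ≤ W x y) (u₁ : Bool) (y : Y × Y) :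
    0 ≤ Wminus W u₁ y :=
  Finset.sum_nonneg fun u₂ _ => Wplus_nonneg hW u₂ (y.1, y.2, u₁)

lemma Wplus_le_Wminus (hW : ∀ x y, 0 ≤ W x y) (u₁ u₂ : Bool) (y₁ y₂ : Y) :
    Wplus W u₂ (y₁, y₂, u₁) ≤ Wminus W u₁ (y₁, y₂) :=
  Finset.single_le_sum (f := fun v => Wplus W v (y₁, y₂, u₁))
    (fun v _ => Wplus_nonneg hW v _) (Finset.mem_univ u₂)

lemma Wplus_mul_logb_chain (hW : ∀ x y, 0 ≤ W x y) (u₁ u₂ : Bool) (y₁ y₂ : Y) :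
    Wplus W u₂ (y₁, y₂, u₁) *
        (logb 2 (Wminus W u₁ (y₁, y₂) / outputDist (Wminus W) (y₁, y₂)) +
          logb 2 (Wplus W u₂ (y₁, y₂, u₁) / outputDist (Wplus W) (y₁, y₂, u₁))) =
      Wplus W u₂ (y₁, y₂, u₁) *
        (logb 2 (W (u₁ ^^ u₂) y₁ / outputDist W y₁) + logb 2 (W u₂ y₂ / outputDist W y₂)) := by
  rcases (Wplus_nonneg hW u₂ (y₁, y₂, u₁)).eq_or_lt with hzero | hpos
  · rw [← hzero, zero_mul, zero_mul]
  congr 1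
  have ha : 0 < W (u₁ ^^ u₂) y₁ :=
    (hW _ _).lt_of_ne' fun h => by simp [Wplus_apply, h] at hpos
  have hb : 0 < W u₂ y₂ := (hW _ _).lt_of_ne' fun h => by simp [Wplus_apply, h] at hpos
  have hq₁ : 0 < outputDist W y₁ := by linarith [half_mul_le_outputDist hW (u₁ ^^ u₂) y₁]
  have hq₂ : 0 < outputDist W y₂ := by linarith [half_mul_le_outputDist hW u₂ y₂]
  have hm : 0 < Wminus W u₁ (y₁, y₂) := hpos.trans_le (Wplus_le_Wminus hW u₁ u₂ y₁ y₂)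
  -- both sides are `logb 2 (2 W⁺ / (q y₁ * q y₂))`, with `q = outputDist W`
  rw [outputDist_Wminus, outputDist_Wplus, ← logb_mul (by positivity) (by positivity),
    ← logb_mul (by positivity) (by positivity), Wplus_apply]
  congr 1
  field_simp

end Transforms

section Information

variable {Y : Type*} [Fintype Y] {W : Bool → Y → ℝ}

lemma Ifun_eq_sum_outputDist (W V : Bool → Y → ℝ) :
    Ifun W V = ∑ y, ∑ x, (1/2) * W x y * logb 2 (V x y / outputDist V y) := rfl

lemma Ifun_Wminus_eq_sum_Wplus (W : Bool → Y → ℝ) :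
    Ifun (Wminus W) (Wminus W) = ∑ y₁, ∑ y₂, ∑ u₁, ∑ u₂, (1/2) * Wplus W u₂ (y₁, y₂, u₁) *
      logb 2 (Wminus W u₁ (y₁, y₂) / outputDist (Wminus W) (y₁, y₂)) := by
  simp only [Ifun_eq_sum_outputDist, Fintype.sum_prod_type]
  refine Finset.sum_congr rfl fun y₁ _ => Finset.sum_congr rfl fun y₂ _ =>
    Finset.sum_congr rfl fun u₁ _ => ?_
  rw [Wminus_apply_eq_sum_Wplus W u₁, Finset.mul_sum, Finset.sum_mul]

lemma Ifun_Wplus_eq_sum (W : Bool → Y → ℝ) :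
    Ifun (Wplus W) (Wplus W) = ∑ y₁, ∑ y₂, ∑ u₁, ∑ u₂, (1/2) * Wplus W u₂ (y₁, y₂, u₁) *
      logb 2 (Wplus W u₂ (y₁, y₂, u₁) / outputDist (Wplus W) (y₁, y₂, u₁)) := by
  simp only [Ifun_eq_sum_outputDist, Fintype.sum_prod_type]

lemma sum_half_mul_eq_one (hW : ∀ x, ∑ y, W x y = 1) : ∑ y, ∑ x, (1/2) * W x y = 1 := by
  rw [Finset.sum_comm]
  simp only [Fintype.sum_bool, ← Finset.mul_sum, hW]
  norm_num

lemma sum_Wplus_mul_add (hW : ∀ x, ∑ y, W x y = 1) (g : Bool → Y → ℝ) :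
    ∑ y₁, ∑ y₂, ∑ u₁, ∑ u₂, (1/2) * Wplus W u₂ (y₁, y₂, u₁) * (g (u₁ ^^ u₂) y₁ + g u₂ y₂) =
      2 * ∑ y, ∑ x, (1/2) * W x y * g x y := by
  set E := fun y => ∑ x, (1/2) * W x y * g x y
  set M := fun y => ∑ x, (1/2) * W x y
  have hsplit : ∀ y₁ y₂, ∑ u₁, ∑ u₂, (1/2) * Wplus W u₂ (y₁, y₂, u₁) * (g (u₁ ^^ u₂) y₁ + g u₂ y₂)
      = E y₁ * M y₂ + M y₁ * E y₂ := by
    intro y₁ y₂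
    simp only [E, M, Wplus_apply, Fintype.sum_bool, Bool.xor_false, Bool.xor_true,
      Bool.not_false, Bool.not_true]
    ring
  simp only [hsplit, Finset.sum_add_distrib, ← Finset.mul_sum, ← Finset.sum_mul]
  rw [sum_half_mul_eq_one hW]
  ring

theorem IsChannel.Ifun_Wminus_add_Ifun_Wplus (hW : IsChannel W) :
    Ifun (Wminus W) (Wminus W) + Ifun (Wplus W) (Wplus W) = 2 * Ifun W W := by
  rw [Ifun_Wminus_eq_sum_Wplus, Ifun_Wplus_eq_sum, Ifun_eq_sum_outputDist W W,
    ← sum_Wplus_mul_add hW.sum_eq_one]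
  simp only [← Finset.sum_add_distrib, mul_assoc, ← mul_add, Wplus_mul_logb_chain hW.nonneg]

lemma sum_sum_Wplus (hW : ∀ x, ∑ y, W x y = 1) (u₁ u₂ : Bool) :
    ∑ y₁, ∑ y₂, Wplus W u₂ (y₁, y₂, u₁) = 1/2 := by
  simp only [Wplus_apply, ← Finset.mul_sum, hW, mul_one]

lemma IsChannel.Wminus (hW : IsChannel W) : IsChannel (Wminus W) where
  nonneg := Wminus_nonneg hW.nonneg
  sum_eq_one u₁ := by
    simp only [Fintype.sum_prod_type, Wminus_apply_eq_sum_Wplus, Fintype.sum_bool, Finset.sum_add_distrib, sum_sum_Wplus hW.sum_eq_one]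
    norm_num

lemma IsChannel.Wplus (hW : IsChannel W) : IsChannel (Wplus W) where
  nonneg := Wplus_nonneg hW.nonneg
  sum_eq_one u₂ := by
    simp only [Fintype.sum_prod_type, Fintype.sum_bool, Finset.sum_add_distrib, sum_sum_Wplus hW.sum_eq_one]
    norm_num

end Information

lemma sum_ofFn_fin_succ {α M : Type*} [Fintype α] [AddCommMonoid M] (n : ℕ) (f : List α → M) :
    ∑ s : Fin (n + 1) → α, f (List.ofFn s) = ∑ a, ∑ t : Fin n → α, f (a :: List.ofFn t) := by
  rw [← (Fin.consEquiv fun _ => α).sum_comp, Fintype.sum_prod_type]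
  simp [Fin.consEquiv, List.ofFn_succ]

lemma Ifun_polarChan_cons_true {Y : Type*} [Fintype Y] (W : Bool → Y → ℝ) (s : List Bool) :
    Ifun (polarChan W (true :: s)) (polarChan W (true :: s)) =
      Ifun (polarChan (Wplus W) s) (polarChan (Wplus W) s) := rfl

lemma Ifun_polarChan_cons_false {Y : Type*} [Fintype Y] (W : Bool → Y → ℝ) (s : List Bool) :
    Ifun (polarChan W (false :: s)) (polarChan W (false :: s)) =
      Ifun (polarChan (Wminus W) s) (polarChan (Wminus W) s) := rfl

theorem IsChannel.sum_Ifun_polarChan {Y : Type u} [Fintype Y] {W : Bool → Y → ℝ}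
    (hW : IsChannel W) (n : ℕ) :
    ∑ s : Fin n → Bool,
      Ifun (polarChan W (List.ofFn s)) (polarChan W (List.ofFn s)) = 2 ^ n * Ifun W W := by
  induction n generalizing Y with
  | zero => rw [Fintype.sum_unique, List.ofFn_zero, pow_zero, one_mul]; rfl
  | succ n ih =>
    rw [sum_ofFn_fin_succ n fun s => Ifun (polarChan W s) (polarChan W s), Fintype.sum_bool]
    simp only [Ifun_polarChan_cons_true, Ifun_polarChan_cons_false]
    rw [ih hW.Wplus, ih hW.Wminus, pow_succ]
    linear_combination 2 ^ n * hW.Ifun_Wminus_add_Ifun_Wplus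

/-- conservation of symmetric information under `n`-fold
polarization: `∑_{s ∈ {+,-}ⁿ} I(W^s) = 2ⁿ I(W)`. -/
theorem symmetric_info_n_step_conservation {Y : Type*} [Fintype Y]
    (W : Bool → Y → ℝ)
    (hW0 : ∀ x y, 0 ≤ W x y) (hW1 : ∀ x, ∑ y, W x y = 1) (n : ℕ) :
    ∑ s : Fin n → Bool,
        Ifun (polarChan W (List.ofFn s)) (polarChan W (List.ofFn s)) =
      2^n * Ifun W W :=
  IsChannel.sum_Ifun_polarChan ⟨hW0, hW1⟩ n

end
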